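/- arXiv:0903.0432 — 2 statements merged into one kernel-verified Lean document; each statement's English description precedes it below -/
import Mathlib

section
/- For every 0 < c < 1 there exists a constant q₁ > 0 such that for every g admissible with constant c, every m ≥ 1, every n ≥ 0, and every sequence (x₁,…,x_m) ∈ (ℤ^d)^m: ∑_{y₁,…,y_n ∈ ℤ^d} |φ̃_{(x₁,…,x_m)}(y₁,…,y_n)| ≤ n! · q₁^{m+n} (in particular the sum converges and the bound is uniform in (x₁,…,x_m)). -/
open scoped BigOperators

/-- The lattice `ℤ^d`. -/
abbrev Zd (d : ℕ) := Fin d → ℤ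

noncomputable section

/-- `∑_{x ≠ 0} |g x|`. -/
def gNorm (d : ℕ) (g : Zd d → ℝ) : ℝ := ∑' x : {x : Zd d // x ≠ 0}, |g x.1|

/-- Summability of `|g|` off the origin. -/
def gSummable (d : ℕ) (g : Zd d → ℝ) : Prop :=
  Summable (fun x : {x : Zd d // x ≠ 0} => |g x.1|)

/-- `g` is admissible with constant `c`:  `g 0 = -1`, `g` is even, and `∑_{x≠0}|g x| ≤ c`. -/
def Admissible (d : ℕ) (g : Zd d → ℝ) (c : ℝ) : Prop :=
  g 0 = -1 ∧ (∀ x, g x = g (-x)) ∧ gSummable d g ∧ gNorm d g ≤ c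

/-- Boltzmann factors: `ψ_m(x₁,…,x_m) = ∏_{1 ≤ i < j ≤ m} (1 + g (x_i - x_j))`. -/
def boltz (d : ℕ) (g : Zd d → ℝ) (m : ℕ) (x : Fin m → Zd d) : ℝ :=
  ∏ p ∈ Finset.univ.filter (fun p : Fin m × Fin m => p.1 < p.2), (1 + g (x p.1 - x p.2))

/-- Ursell functions: `φ_m(x₁,…,x_m) = ∑_π (-1)^{|π|-1}(|π|-1)! ∏_{P ∈ π} ψ_{|P|}((x_i)_{i∈P})`,
the sum being over all partitions `π` of `{1,…,m}` into nonempty blocks. -/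
def ursell (d : ℕ) (g : Zd d → ℝ) (m : ℕ) (x : Fin m → Zd d) : ℝ :=
  ∑ π : Finpartition (Finset.univ : Finset (Fin m)),
    (-1 : ℝ) ^ (π.parts.card - 1) * (Nat.factorial (π.parts.card - 1)) *
      ∏ P ∈ π.parts, boltz d g P.card (fun i => x (P.orderIsoOfFin rfl i).1)

/-- `∑_{y₁,…,y_n ∈ ℤ^d} φ_{1+n}(0, y₁, …, y_n)`. -/
def ursellSumA (d : ℕ) (g : Zd d → ℝ) (n : ℕ) : ℝ :=
  ∑' y : Fin n → Zd d, ursell d g (n + 1) (Fin.cons 0 y)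

/-- `A(z,g) = ∑_{n ≥ 1} (z^{n-1}/n!) ∑_{y₁,…,y_n} φ_{1+n}(0,y₁,…,y_n)`. -/
def AFun (d : ℕ) (z : ℝ) (g : Zd d → ℝ) : ℝ :=
  ∑' k : ℕ, (z ^ k / (Nat.factorial (k + 1))) * ursellSumA d g (k + 1)

/-- Absolute convergence of the series defining `A(z,g)`. -/
def AConv (d : ℕ) (z : ℝ) (g : Zd d → ℝ) : Prop :=
  (∀ n : ℕ, Summable (fun y : Fin n → Zd d => |ursell d g (n + 1) (Fin.cons 0 y)|)) ∧
  Summable (fun k : ℕ => (z ^ k / (Nat.factorial (k + 1))) *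
    ∑' y : Fin (k + 1) → Zd d, |ursell d g (k + 2) (Fin.cons 0 y)|)

/-- `∑_{y₁,…,y_n ∈ ℤ^d} φ_{2+n}(0, x, y₁, …, y_n)`. -/
def ursellSumB (d : ℕ) (g : Zd d → ℝ) (x : Zd d) (n : ℕ) : ℝ :=
  ∑' y : Fin n → Zd d, ursell d g (n + 2) (Fin.cons 0 (Fin.cons x y))

/-- `B(z,g)(x) = ∑_{n ≥ 1} (z^{n-1}/n!) ∑_{y₁,…,y_n} φ_{2+n}(0,x,y₁,…,y_n)`. -/
def BFun (d : ℕ) (z : ℝ) (g : Zd d → ℝ) (x : Zd d) : ℝ :=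
  ∑' k : ℕ, (z ^ k / (Nat.factorial (k + 1))) * ursellSumB d g x (k + 1)

/-- Absolute convergence of the series defining `B(z,g)(x)`. -/
def BConv (d : ℕ) (z : ℝ) (g : Zd d → ℝ) (x : Zd d) : Prop :=
  (∀ n : ℕ, Summable (fun y : Fin n → Zd d => |ursell d g (n + 2) (Fin.cons 0 (Fin.cons x y))|)) ∧
  Summable (fun k : ℕ => (z ^ k / (Nat.factorial (k + 1))) *
    ∑' y : Fin (k + 1) → Zd d, |ursell d g (k + 3) (Fin.cons 0 (Fin.cons x y))|)

/-- The cube `Λ_k = {-k,…,k}^d`. -/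
def cube (d : ℕ) (k : ℕ) : Finset (Zd d) :=
  Fintype.piFinset (fun _ => Finset.Icc (-(k : ℤ)) (k : ℤ))

/-- The grand partition function `Ξ(Λ, z, g)`. -/
def partitionFn (d : ℕ) (g : Zd d → ℝ) (z : ℝ) (Λ : Finset (Zd d)) : ℝ :=
  ∑' n : ℕ, (z ^ n / (Nat.factorial n)) *
    ∑ x : Fin n → Λ, boltz d g n (fun i => (x i).1)

/-- The finite-volume correlation function `ρ_m^Λ(x₁,…,x_m)`. -/
def corrFn (d : ℕ) (g : Zd d → ℝ) (z : ℝ) (Λ : Finset (Zd d)) (m : ℕ)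
    (x : Fin m → Zd d) : ℝ :=
  (partitionFn d g z Λ)⁻¹ *
    ∑' n : ℕ, (z ^ (m + n) / (Nat.factorial n)) *
      ∑ y : Fin n → Λ, boltz d g (m + n) (Fin.append x (fun i => (y i).1))

/-- All ways of splitting a list into a subsequence together with the complementary
subsequence. -/
def splits {α : Type*} : List α → List (List α × List α)
  | [] => [([], [])]
  | a :: l => ((splits l).map fun p => (a :: p.1, p.2)) ++ ((splits l).map fun p => (p.1, a :: p.2))

theorem splits_length {α : Type*} : ∀ (Y : List α), ∀ p ∈ splits Y,
    p.1.length + p.2.length = Y.length := by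
  intro Y
  induction Y with
  | nil => simp [splits]
  | cons a l ih =>
    intro p hp
    simp only [splits, List.mem_append, List.mem_map] at hp
    rcases hp with ⟨q, hq, rfl⟩ | ⟨q, hq, rfl⟩ <;> have := ih q hq <;> simp <;> omega

/-- The functions `φ̃_X(Y)` defined by the recurrence
`φ̃_X(Y) = ∏_{i=2}^m (1 + g(x_i - x₁)) ∑_{S ⊆ Y} (∏_{y_j ∈ S} g(y_j - x₁)) φ̃_{(x₂,…,x_m,S)}(Y∖S)`
with `φ̃_∅(Y) = 1` if `Y = ∅` and `0` otherwise. -/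
def phiTilde (d : ℕ) (g : Zd d → ℝ) : List (Zd d) → List (Zd d) → ℝ
  | [], Y => if Y = [] then 1 else 0
  | x₁ :: X', Y =>
    (X'.map fun x => 1 + g (x - x₁)).prod *
      ((splits Y).attach.map fun p =>
        (p.1.1.map fun y => g (y - x₁)).prod * phiTilde d g (X' ++ p.1.1) p.1.2).sum
termination_by X Y => X.length + 2 * Y.length
decreasing_by
  have h := splits_length Y p.1 p.2
  simp only [List.length_append, List.length_cons]
  omega

/-- The convolution product on sequences of functions (viewed as functions on finite
sequences): `(χ¹ * χ²)(X) = ∑_{Y ⊆ X} χ¹(Y) χ²(X∖Y)`. -/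
def convA (d : ℕ) (χ₁ χ₂ : List (Zd d) → ℝ) : List (Zd d) → ℝ :=
  fun X => ((splits X).map fun p => χ₁ p.1 * χ₂ p.2).sum

/-- The unit `𝟏` of the convolution algebra. -/
def oneA (d : ℕ) : List (Zd d) → ℝ := fun X => if X = [] then 1 else 0

/-- The Boltzmann factors as a function on finite sequences:
`ψ(x₁,…,x_m) = ∏_{1 ≤ i < j ≤ m} (1 + g(x_i - x_j))`. -/
def boltzL (d : ℕ) (g : Zd d → ℝ) (X : List (Zd d)) : ℝ :=
  ∏ p ∈ Finset.univ.filter (fun p : Fin X.length × Fin X.length => p.1 < p.2),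
    (1 + g (X.get p.1 - X.get p.2))

/-- An element `χ` of the algebra `𝒜` is a sequence of *bounded* functions. -/
def BoundedA (d : ℕ) (χ : List (Zd d) → ℝ) : Prop :=
  ∀ m : ℕ, ∃ M : ℝ, ∀ X : List (Zd d), X.length = m → |χ X| ≤ M

end

/-!
For `X` without repeated points put `w(X) = exp (∑_{i<j} |g (x_j - x_i)|)`, and `w(X) = 0`
otherwise. By induction on `|X| + 2n`, for every finite `G ⊆ ℤ^d`,
`∑_{Y ∈ G^n} |φ̃_X(Y)| ≤ n! q^{|X|+n} w(X)` with `q = exp B`, `B = (1 + c) e^{1+c}`.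
In the recurrence the prefactor `∏ |1 + g(x_i - x₁)|` is at most `exp` of the first row of
the pair sum, so it merges `w(x₂,…,x_m)` into `w(X)` (and it vanishes if `x₁` is repeated).
Summed over `Y ∈ G^n`, the choice of the subsequence `S` of `Y` is the binomial expansion of
`(L + R)^n` for the two commuting operators "put a point of `G` in front of `S`" and "… in
front of `Y ∖ S`"; each point put into `S` costs at most `B`, because `∑ |g|` over distinct
points is at most `1 + c`, and `∑_k C(n,k) (n-k)! B^k ≤ n! e^B`. Finally
`w(X) ≤ e^{(1+c)|X|}`.
-/

open Finset Fintype Real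
open scoped Nat

section SplitSum

variable {α R : Type*} [CommSemiring R]

theorem sum_piFinset_succ {M : Type*} [AddCommMonoid M] (G : Finset α) {n : ℕ}
    (f : (Fin (n + 1) → α) → M) :
    ∑ y ∈ piFinset (fun _ => G), f y =
      ∑ a ∈ G, ∑ y ∈ piFinset (fun _ : Fin n => G), f (Fin.cons a y) := by
  rw [← Finset.sum_product']
  refine Finset.sum_nbij' (fun y => (y 0, Fin.tail y)) (fun p => Fin.cons p.1 p.2)
    ?_ ?_ ?_ ?_ ?_ <;> simp [Fin.forall_fin_succ, Fin.tail]

theorem sum_list_map_comm {β : Type*} (G : Finset α) (f : α → β → R) (l : List β) :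
    ∑ a ∈ G, (l.map (f a)).sum = (l.map fun b => ∑ a ∈ G, f a b).sum := by
  induction l with
  | nil => simp
  | cons b l ih => simp [Finset.sum_add_distrib, ih]

def splitSum (G : Finset α) (w : α → R) (Φ : List α → List α → R) (n : ℕ) : R :=
  ∑ y ∈ piFinset (fun _ : Fin n => G),
    ((splits (List.ofFn y)).map fun p => (p.1.map w).prod * Φ p.1 p.2).sum

def consLeft (G : Finset α) (w : α → R) : Module.End R (List α → List α → R) where
  toFun Φ S T := ∑ a ∈ G, w a * Φ (a :: S) T
  map_add' Φ Ψ := by ext S T; simp [mul_add, Finset.sum_add_distrib]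
  map_smul' r Φ := by ext S T; simp [Finset.mul_sum, mul_left_comm]

def consRight (G : Finset α) : Module.End R (List α → List α → R) where
  toFun Φ S T := ∑ a ∈ G, Φ S (a :: T)
  map_add' Φ Ψ := by ext S T; simp [Finset.sum_add_distrib]
  map_smul' r Φ := by ext S T; simp [Finset.mul_sum]

variable (G : Finset α) (w : α → R)

theorem consLeft_apply (Φ : List α → List α → R) (S T : List α) :
    consLeft G w Φ S T = ∑ a ∈ G, w a * Φ (a :: S) T := rfl

theorem consRight_apply (Φ : List α → List α → R) (S T : List α) :
    consRight G Φ S T = ∑ a ∈ G, Φ S (a :: T) := rfl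

theorem commute_consLeft_consRight : Commute (consLeft G w) (consRight (R := R) G) := by
  ext Φ S T
  simp only [Module.End.mul_apply, consLeft_apply, consRight_apply, Finset.mul_sum]
  exact Finset.sum_comm

theorem consLeft_pow_apply (k : ℕ) (Φ : List α → List α → R) (S T : List α) :
    (consLeft G w ^ k) Φ S T = ∑ s ∈ piFinset (fun _ : Fin k => G),
      ((List.ofFn s).map w).prod * Φ (List.ofFn s ++ S) T := by
  induction k generalizing Φ with
  | zero => simp
  | succ k ih =>
    rw [pow_succ, Module.End.mul_apply, ih, sum_piFinset_succ, Finset.sum_comm]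
    simp [consLeft_apply, List.ofFn_succ, Finset.mul_sum, mul_assoc, mul_left_comm]

theorem consRight_pow_apply (k : ℕ) (Φ : List α → List α → R) (S T : List α) :
    (consRight G ^ k) Φ S T =
      ∑ t ∈ piFinset (fun _ : Fin k => G), Φ S (List.ofFn t ++ T) := by
  induction k generalizing Φ with
  | zero => simp
  | succ k ih =>
    rw [pow_succ, Module.End.mul_apply, ih, sum_piFinset_succ, Finset.sum_comm]
    simp [consRight_apply, List.ofFn_succ]

theorem splitSum_zero (Φ : List α → List α → R) : splitSum G w Φ 0 = Φ [] [] := by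
  simp [splitSum, splits]

theorem splitSum_succ (Φ : List α → List α → R) (n : ℕ) :
    splitSum G w Φ (n + 1) =
      splitSum G w ((consLeft G w + consRight G : Module.End R _) Φ) n := by
  rw [splitSum, sum_piFinset_succ, Finset.sum_comm]
  refine Finset.sum_congr rfl fun y _ => ?_
  simp [List.ofFn_succ, splits, Finset.sum_add_distrib, sum_list_map_comm, consLeft_apply,
    consRight_apply, mul_add, Finset.mul_sum, List.sum_map_add, mul_assoc]
  congr 3 with p
  exact Finset.sum_congr rfl fun a _ => mul_left_comm _ _ _

theorem splitSum_eq_pow_apply (Φ : List α → List α → R) (n : ℕ) :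
    splitSum G w Φ n = ((consLeft G w + consRight G : Module.End R _) ^ n) Φ [] [] := by
  induction n generalizing Φ with
  | zero => simp [splitSum_zero]
  | succ n ih => rw [splitSum_succ, ih, pow_succ, Module.End.mul_apply]

theorem splitSum_eq (Φ : List α → List α → R) (n : ℕ) :
    splitSum G w Φ n = ∑ k ∈ range (n + 1), (n.choose k : R) *
      ∑ s ∈ piFinset (fun _ : Fin k => G), ((List.ofFn s).map w).prod *
        ∑ t ∈ piFinset (fun _ : Fin (n - k) => G), Φ (List.ofFn s) (List.ofFn t) := by
  rw [splitSum_eq_pow_apply, (commute_consLeft_consRight G w).add_pow]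
  simp [Finset.sum_apply, Module.End.mul_apply, consLeft_pow_apply, consRight_pow_apply,
    Module.End.natCast_apply, Finset.mul_sum, mul_left_comm]

end SplitSum

theorem List.prod_map_abs_one_add_le_exp {α : Type*} (f : α → ℝ) :
    ∀ l : List α, (l.map fun x => |1 + f x|).prod ≤ exp (l.map fun x => |f x|).sum
  | [] => by simp
  | x :: l => by
    rw [List.map_cons, List.prod_cons, List.map_cons, List.sum_cons, exp_add]
    have hx : |1 + f x| ≤ exp |f x| :=
      (abs_add_le 1 (f x)).trans (by rw [abs_one, add_comm]; exact add_one_le_exp _)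
    exact mul_le_mul hx (prod_map_abs_one_add_le_exp f l)
      (List.prod_nonneg (by simp))
      (exp_pos _).le

theorem Finset.exists_sum_le_sum_piFinset {α M : Type*} [AddCommMonoid M] [PartialOrder M]
    [IsOrderedAddMonoid M] {n : ℕ} {f : (Fin n → α) → M} (hf : ∀ y, 0 ≤ f y)
    (F : Finset (Fin n → α)) :
    ∃ G : Finset α, ∑ y ∈ F, f y ≤ ∑ y ∈ piFinset (fun _ => G), f y := by
  classical
  refine ⟨F.biUnion fun y => univ.image y, sum_le_sum_of_subset_of_nonneg ?_ fun y _ _ => hf y⟩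
  intro y hy
  simp only [mem_piFinset, mem_biUnion, mem_image, mem_univ, true_and]
  exact fun i => ⟨y, hy, i, rfl⟩

theorem sum_choose_mul_factorial_mul_pow_le {x : ℝ} (hx : 0 ≤ x) (n : ℕ) :
    ∑ k ∈ range (n + 1), (n.choose k : ℝ) * (n - k)! * x ^ k ≤ n ! * exp x := by
  calc ∑ k ∈ range (n + 1), (n.choose k : ℝ) * (n - k)! * x ^ k
      = n ! * ∑ k ∈ range (n + 1), x ^ k / k ! := by
        rw [Finset.mul_sum]
        refine Finset.sum_congr rfl fun k hk => ?_
        have h := Nat.choose_mul_factorial_mul_factorial (Nat.lt_succ_iff.mp (mem_range.mp hk))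
        rw [← h]
        push_cast
        field_simp
    _ ≤ n ! * exp x := by gcongr; exact sum_le_exp_of_nonneg hx _

section PairWeight

variable {d : ℕ} {g : Zd d → ℝ} {c : ℝ}

theorem Admissible.nonneg (hg : Admissible d g c) : 0 ≤ c :=
  (tsum_nonneg fun _ => abs_nonneg _).trans hg.2.2.2

theorem Admissible.sum_abs_le (hg : Admissible d g c) (F : Finset (Zd d)) :
    ∑ x ∈ F, |g x| ≤ 1 + c := by
  classical
  calc ∑ x ∈ F, |g x| ≤ |g 0| + ∑ x ∈ F.erase 0, |g x| := by
        by_cases h0 : (0 : Zd d) ∈ F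
        · exact (Finset.add_sum_erase _ _ h0).ge
        · rw [Finset.erase_eq_of_notMem h0]
          linarith [abs_nonneg (g 0)]
    _ ≤ 1 + c := by
        rw [hg.1, abs_neg, abs_one, ← Finset.filter_ne', ← Finset.sum_subtype_eq_sum_filter]
        gcongr
        exact (hg.2.2.1.sum_le_tsum _ fun _ _ => abs_nonneg _).trans hg.2.2.2

theorem Admissible.sum_abs_sub_le (hg : Admissible d g c) (F : Finset (Zd d)) (x : Zd d) :
    ∑ z ∈ F, |g (z - x)| ≤ 1 + c := by
  classical
  rw [← Finset.sum_image (g := fun z => z - x) (f := fun w => |g w|)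
    fun _ _ _ _ h => sub_left_injective h]
  exact hg.sum_abs_le _

theorem Admissible.sum_abs_sub_le' (hg : Admissible d g c) (F : Finset (Zd d)) (x : Zd d) :
    ∑ z ∈ F, |g (x - z)| ≤ 1 + c := by
  classical
  rw [← Finset.sum_image (g := fun z => x - z) (f := fun w => |g w|)
    fun _ _ _ _ h => sub_right_injective h]
  exact hg.sum_abs_le _

variable (g) in
def pairSum : List (Zd d) → ℝ
  | [] => 0
  | x :: L => (L.map fun z => |g (z - x)|).sum + pairSum L

variable (g) in
theorem pairSum_append_singleton (a : Zd d) :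
    ∀ L : List (Zd d), pairSum g (L ++ [a]) = pairSum g L + (L.map fun z => |g (a - z)|).sum
  | [] => by simp [pairSum]
  | x :: L => by
    simp only [List.cons_append, pairSum, pairSum_append_singleton a L, List.map_append,
      List.sum_append, List.map_cons, List.map_nil, List.sum_cons, List.sum_nil]
    ring

theorem pairSum_le (hg : Admissible d g c) :
    ∀ {L : List (Zd d)}, L.Nodup → pairSum g L ≤ (1 + c) * L.length
  | [], _ => by simp [pairSum]
  | x :: L, hL => by
    have hrow : (L.map fun z => |g (z - x)|).sum ≤ 1 + c := by
      rw [← List.sum_toFinset _ (List.nodup_cons.mp hL).2]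
      exact hg.sum_abs_sub_le _ x
    have := pairSum_le hg (List.nodup_cons.mp hL).2
    simp only [pairSum, List.length_cons, Nat.cast_succ]
    linarith

variable (g) in
noncomputable def pairWeight (X : List (Zd d)) : ℝ := if X.Nodup then exp (pairSum g X) else 0

variable (g) in
theorem pairWeight_nonneg (X : List (Zd d)) : 0 ≤ pairWeight g X := by
  unfold pairWeight
  split_ifs <;> positivity

theorem pairWeight_le_exp (hg : Admissible d g c) (X : List (Zd d)) :
    pairWeight g X ≤ exp ((1 + c) * X.length) := by
  unfold pairWeight
  split_ifs with hX
  · exact exp_le_exp.mpr (pairSum_le hg hX)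
  · positivity

theorem pairWeight_append_singleton_le (hg : Admissible d g c) (X : List (Zd d)) (a : Zd d) :
    pairWeight g (X ++ [a]) ≤ exp (1 + c) * pairWeight g X := by
  unfold pairWeight
  split_ifs with hXa hX hX
  · rw [pairSum_append_singleton, exp_add, mul_comm]
    gcongr
    rw [← List.sum_toFinset _ hX]
    exact hg.sum_abs_sub_le' _ a
  · exact absurd (List.nodup_append.mp hXa).1 hX
  · positivity
  · simp

theorem sum_prod_mul_pairWeight_le (hg : Admissible d g c) (G : Finset (Zd d)) (x₁ : Zd d)
    (k : ℕ) (X : List (Zd d)) :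
    ∑ s ∈ piFinset (fun _ : Fin k => G),
        ((List.ofFn s).map fun y => |g (y - x₁)|).prod * pairWeight g (X ++ List.ofFn s) ≤
      ((1 + c) * exp (1 + c)) ^ k * pairWeight g X := by
  have hc := hg.nonneg
  induction k generalizing X with
  | zero => simp
  | succ k ih =>
    rw [sum_piFinset_succ]
    calc _ = ∑ a ∈ G, |g (a - x₁)| * ∑ s ∈ piFinset (fun _ : Fin k => G),
            ((List.ofFn s).map fun y => |g (y - x₁)|).prod *
              pairWeight g ((X ++ [a]) ++ List.ofFn s) := by
          simp [List.ofFn_succ, Finset.mul_sum, mul_assoc]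
      _ ≤ ∑ a ∈ G, |g (a - x₁)| *
            (((1 + c) * exp (1 + c)) ^ k * (exp (1 + c) * pairWeight g X)) := by
          gcongr with a
          exact (ih _).trans (mul_le_mul_of_nonneg_left
            (pairWeight_append_singleton_le hg X a) (by positivity))
      _ ≤ (1 + c) * (((1 + c) * exp (1 + c)) ^ k * (exp (1 + c) * pairWeight g X)) := by
          rw [← Finset.sum_mul]
          have := pairWeight_nonneg g X
          gcongr
          exact hg.sum_abs_sub_le G x₁
      _ = ((1 + c) * exp (1 + c)) ^ (k + 1) * pairWeight g X := by ring

end PairWeight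

section PhiTilde

variable {d : ℕ} {g : Zd d → ℝ} {c : ℝ}

theorem prod_abs_one_add_mul_pairWeight_le (hg0 : g 0 = -1) (x₁ : Zd d) (X : List (Zd d)) :
    (X.map fun x => |1 + g (x - x₁)|).prod * pairWeight g X ≤ pairWeight g (x₁ :: X) := by
  by_cases hx : x₁ ∈ X
  · rw [List.prod_eq_zero (List.mem_map.mpr ⟨x₁, hx, by simp [hg0]⟩), zero_mul]
    exact pairWeight_nonneg g _
  by_cases hX : X.Nodup
  · rw [pairWeight, if_pos hX, pairWeight, if_pos (List.nodup_cons.mpr ⟨hx, hX⟩), pairSum,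
      exp_add]
    gcongr
    exact List.prod_map_abs_one_add_le_exp _ X
  · simp [pairWeight, hX]

variable (g) in
theorem phiTilde_cons (x₁ : Zd d) (X Y : List (Zd d)) :
    phiTilde d g (x₁ :: X) Y = (X.map fun x => 1 + g (x - x₁)).prod *
      ((splits Y).map fun p => (p.1.map fun y => g (y - x₁)).prod *
        phiTilde d g (X ++ p.1) p.2).sum := by
  rw [phiTilde]
  congr 1
  conv_rhs => rw [← List.attach_map_subtype_val (splits Y), List.map_map]
  rfl

variable (g) in
theorem abs_phiTilde_cons_le (x₁ : Zd d) (X Y : List (Zd d)) :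
    |phiTilde d g (x₁ :: X) Y| ≤ (X.map fun x => |1 + g (x - x₁)|).prod *
      ((splits Y).map fun p => (p.1.map fun y => |g (y - x₁)|).prod *
        |phiTilde d g (X ++ p.1) p.2|).sum := by
  have habs_prod : ∀ l : List ℝ, |l.prod| = (l.map abs).prod :=
    map_list_prod (absHom : ℝ →*₀ ℝ)
  rw [phiTilde_cons, abs_mul, habs_prod, List.map_map, Function.comp_def]
  refine mul_le_mul_of_nonneg_left ?_ (List.prod_nonneg (by simp))
  refine (List.le_sum_of_subadditive (fun x : ℝ => |x|) abs_zero.le abs_add_le _).trans_eq ?_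
  simp [abs_mul, habs_prod, List.map_map, Function.comp_def]

variable (g) in
theorem sum_abs_phiTilde_nil_le (G : Finset (Zd d)) (n : ℕ) {q : ℝ} (hq : 0 ≤ q) :
    ∑ y ∈ piFinset (fun _ : Fin n => G), |phiTilde d g [] (List.ofFn y)| ≤ n ! * q ^ n := by
  cases n
  · simp [phiTilde]
  · simp only [phiTilde, List.ofFn_eq_nil_iff, Nat.add_one_ne_zero, if_false, abs_zero,
      Finset.sum_const_zero]
    positivity

theorem splitSum_abs_phiTilde_le (hg : Admissible d g c) (G : Finset (Zd d)) (x₁ : Zd d)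
    (X : List (Zd d)) (n : ℕ) {q : ℝ} (hq : 0 ≤ q)
    (hbound : ∀ k ≤ n, ∀ Z : List (Zd d), Z.length = X.length + k →
      ∑ t ∈ piFinset (fun _ : Fin (n - k) => G), |phiTilde d g Z (List.ofFn t)| ≤
        (n - k)! * q ^ (X.length + n) * pairWeight g Z) :
    splitSum G (fun y => |g (y - x₁)|) (fun S T => |phiTilde d g (X ++ S) T|) n ≤
      n ! * exp ((1 + c) * exp (1 + c)) * q ^ (X.length + n) * pairWeight g X := by
  have hB : 0 ≤ (1 + c) * exp (1 + c) := by have := hg.nonneg; positivity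
  have hw := pairWeight_nonneg g X
  rw [splitSum_eq]
  calc _ ≤ ∑ k ∈ range (n + 1), (n.choose k : ℝ) * ∑ s ∈ piFinset (fun _ : Fin k => G),
          ((List.ofFn s).map fun y => |g (y - x₁)|).prod *
            ((n - k)! * q ^ (X.length + n) * pairWeight g (X ++ List.ofFn s)) := by
        gcongr with k hk s
        · exact List.prod_nonneg (by simp)
        exact hbound k (Nat.lt_succ_iff.mp (mem_range.mp hk)) _ (by simp)
    _ = ∑ k ∈ range (n + 1), (n.choose k : ℝ) * (n - k)! * q ^ (X.length + n) *
          ∑ s ∈ piFinset (fun _ : Fin k => G),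
            ((List.ofFn s).map fun y => |g (y - x₁)|).prod * pairWeight g (X ++ List.ofFn s) := by
        simp only [Finset.mul_sum]
        refine Finset.sum_congr rfl fun k _ => Finset.sum_congr rfl fun s _ => ?_
        ring
    _ ≤ ∑ k ∈ range (n + 1), (n.choose k : ℝ) * (n - k)! * q ^ (X.length + n) *
          (((1 + c) * exp (1 + c)) ^ k * pairWeight g X) := by
        gcongr with k
        exact sum_prod_mul_pairWeight_le hg G x₁ k X
    _ = (∑ k ∈ range (n + 1), (n.choose k : ℝ) * (n - k)! * ((1 + c) * exp (1 + c)) ^ k) *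
          q ^ (X.length + n) * pairWeight g X := by
        rw [Finset.sum_mul, Finset.sum_mul]
        refine Finset.sum_congr rfl fun k _ => ?_
        ring
    _ ≤ n ! * exp ((1 + c) * exp (1 + c)) * q ^ (X.length + n) * pairWeight g X := by
        gcongr
        exact sum_choose_mul_factorial_mul_pow_le hB n

theorem sum_abs_phiTilde_le (hg : Admissible d g c) (G : Finset (Zd d)) (X : List (Zd d))
    (n : ℕ) :
    ∑ y ∈ piFinset (fun _ : Fin n => G), |phiTilde d g X (List.ofFn y)| ≤
      n ! * exp ((1 + c) * exp (1 + c)) ^ (X.length + n) * pairWeight g X := by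
  set q := exp ((1 + c) * exp (1 + c))
  have hq : 0 ≤ q := (exp_pos _).le
  induction h : X.length + 2 * n using Nat.strong_induction_on generalizing X n with
  | _ N ih =>
  cases X with
  | nil => simpa [pairWeight, pairSum] using sum_abs_phiTilde_nil_le g G n hq
  | cons x₁ X =>
    have hsplit := splitSum_abs_phiTilde_le hg G x₁ X n hq fun k hk Z hZ =>
      (ih _ (by rw [List.length_cons] at h; omega) Z (n - k) rfl).trans_eq
        (by rw [hZ, show X.length + k + (n - k) = X.length + n by omega])
    calc _ ≤ (X.map fun x => |1 + g (x - x₁)|).prod *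
          splitSum G (fun y => |g (y - x₁)|) (fun S T => |phiTilde d g (X ++ S) T|) n := by
          rw [splitSum, Finset.mul_sum]
          exact Finset.sum_le_sum fun y _ => abs_phiTilde_cons_le g x₁ X _
      _ ≤ (X.map fun x => |1 + g (x - x₁)|).prod *
          (n ! * q * q ^ (X.length + n) * pairWeight g X) :=
          mul_le_mul_of_nonneg_left hsplit (List.prod_nonneg (by simp))
      _ = n ! * q ^ (X.length + n + 1) *
          ((X.map fun x => |1 + g (x - x₁)|).prod * pairWeight g X) := by ring
      _ ≤ n ! * q ^ ((x₁ :: X).length + n) * pairWeight g (x₁ :: X) := by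
          rw [List.length_cons, add_right_comm]
          gcongr
          exact prod_abs_one_add_mul_pairWeight_le hg.1 x₁ X

theorem sum_abs_phiTilde_le_pow (hg : Admissible d g c) (X : List (Zd d)) {n : ℕ}
    (F : Finset (Fin n → Zd d)) :
    ∑ y ∈ F, |phiTilde d g X (List.ofFn y)| ≤
      n ! * exp ((1 + c) * exp (1 + c) + (1 + c)) ^ (X.length + n) := by
  have hc := hg.nonneg
  obtain ⟨G, hG⟩ := Finset.exists_sum_le_sum_piFinset
    (f := fun y => |phiTilde d g X (List.ofFn y)|) (fun _ => abs_nonneg _) F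
  refine hG.trans ((sum_abs_phiTilde_le hg G X n).trans ?_)
  rw [← exp_nat_mul, ← exp_nat_mul, mul_assoc]
  calc (n ! : ℝ) * (exp (↑(X.length + n) * ((1 + c) * exp (1 + c))) * pairWeight g X)
      ≤ n ! * (exp (↑(X.length + n) * ((1 + c) * exp (1 + c))) * exp ((1 + c) * X.length)) := by
        gcongr
        exact pairWeight_le_exp hg X
    _ ≤ n ! * exp (↑(X.length + n) * ((1 + c) * exp (1 + c) + (1 + c))) := by
        rw [← exp_add]
        gcongr
        push_cast
        nlinarith [(Nat.cast_nonneg n : (0 : ℝ) ≤ n)]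

end PhiTilde

open Filter Topology

theorem statement7_general (d : ℕ) (c : ℝ) :
    ∃ q₁ : ℝ, 0 < q₁ ∧
      ∀ g : Zd d → ℝ, Admissible d g c → ∀ m : ℕ, 1 ≤ m → ∀ n : ℕ,
      ∀ x : Fin m → Zd d,
        Summable (fun y : Fin n → Zd d => |phiTilde d g (List.ofFn x) (List.ofFn y)|) ∧
        (∑' y : Fin n → Zd d, |phiTilde d g (List.ofFn x) (List.ofFn y)|) ≤
          (Nat.factorial n : ℝ) * q₁ ^ (m + n) := by
  refine ⟨exp ((1 + c) * exp (1 + c) + (1 + c)), exp_pos _, fun g hg m _ n x => ?_⟩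
  have hF := List.length_ofFn (f := x) ▸ sum_abs_phiTilde_le_pow hg (List.ofFn x) (n := n)
  have hs := summable_of_sum_le (fun _ => abs_nonneg _) hF
  exact ⟨hs, hs.tsum_le_of_sum_le hF⟩

/-- For every `0 < c < 1` there is `q₁ > 0` such that for every `g`
admissible with constant `c`, all `m ≥ 1`, `n ≥ 0`, and every `(x₁,…,x_m)`,
`∑_{y₁,…,y_n} |φ̃_{(x₁,…,x_m)}(y₁,…,y_n)| ≤ n! q₁^{m+n}`. -/
theorem statement7 (d : ℕ) (hd : 1 ≤ d) (c : ℝ) (hc0 : 0 < c) (hc1 : c < 1) :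
    ∃ q₁ : ℝ, 0 < q₁ ∧
      ∀ g : Zd d → ℝ, Admissible d g c → ∀ m : ℕ, 1 ≤ m → ∀ n : ℕ,
      ∀ x : Fin m → Zd d,
        Summable (fun y : Fin n → Zd d => |phiTilde d g (List.ofFn x) (List.ofFn y)|) ∧
        (∑' y : Fin n → Zd d, |phiTilde d g (List.ofFn x) (List.ofFn y)|) ≤
          (Nat.factorial n : ℝ) * q₁ ^ (m + n) :=
  statement7_general d c
end

section
/- Let g : ℤ^d → ℝ be bounded with g(x) = g(−x) for all x, let ψ be its sequence of Boltzmann factors, and set φ̃_X = ψ^{−1} * D_X ψ. Then φ̃_∅ = 𝟏, and for every finite sequence X = (x₁,…,x_m) with m ≥ 1 and every finite sequence Y = (y₁,…,y_n): φ̃_X(Y) = ∏_{i=2}^m (1 + g(x_i − x₁)) · ∑_{S⊆Y} (∏_{j: y_j∈S} g(y_j − x₁)) · φ̃_{(x₂,…,x_m,S)}(Y∖S), where the sum is over all subsequences S of Y, (x₂,…,x_m,S) is X with x₁ deleted and the entries of S appended, and Y∖S is Y with the entries of S deleted. -/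
open scoped BigOperators

open Filter Topology

/-!
Write `h y = g (y - x₁)`. Expanding the factor `∏_{y ∈ Y'} (1 + h y)` by which
`ψ(x₁, X', Y')` differs from `ψ(X', Y')` gives
`ψ(x₁, X', Y') = ∏_{x ∈ X'} (1 + g (x - x₁)) ∑_{S ⊆ Y'} ∏_S h · ψ(X', S, Y' ∖ S)`, where `ψ` may be evaluated on the reordered sequence because an even `g` makes it symmetric.
Convolving with `ψ⁻¹` and regrouping the three-fold splittings `Y = A ⊔ S ⊔ T` as
`S ⊔ (A ⊔ T)` then gives the recurrence.
-/

lemma prod_filter_lt_eq_prod_prod_Ioi {M : Type*} [CommMonoid M] {m : ℕ}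
    (f : Fin m → Fin m → M) :
    ∏ p ∈ Finset.univ.filter (fun p : Fin m × Fin m => p.1 < p.2), f p.1 p.2
      = ∏ i : Fin m, ∏ j ∈ Finset.Ioi i, f i j := by
  rw [Finset.prod_filter, Fintype.prod_prod_type]
  refine Finset.prod_congr rfl fun i _ => ?_
  rw [← Finset.filter_lt_eq_Ioi, Finset.prod_filter]

section Splits

variable {α : Type*}

lemma perm_of_mem_splits : ∀ {Y : List α}, ∀ p ∈ splits Y, (p.1 ++ p.2).Perm Y
  | [], p, hp => by simp_all [splits]
  | a :: l, p, hp => by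
    simp only [splits, List.mem_append, List.mem_map] at hp
    rcases hp with ⟨q, hq, rfl⟩ | ⟨q, hq, rfl⟩
    · exact (perm_of_mem_splits q hq).cons a
    · exact List.perm_middle.trans ((perm_of_mem_splits q hq).cons a)

lemma sum_splits_prod_map {R : Type*} [CommSemiring R] (h : α → R) (B : List α) :
    ((splits B).map fun q => (q.1.map h).prod).sum = (B.map fun y => 1 + h y).prod := by
  induction B with
  | nil => simp [splits]
  | cons a l ih =>
    simp only [splits, List.map_append, List.map_map, List.sum_append, Function.comp_def,
      List.map_cons, List.prod_cons, List.sum_map_mul_left, ih]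
    ring

/-- Both sides sum `F A S T` over all ways of writing `Y` as a shuffle of three
subsequences `A`, `S`, `T`. -/
lemma sum_splits_sum_splits_comm {M : Type*} [AddCommMonoid M] (Y : List α)
    (F : List α → List α → List α → M) :
    ((splits Y).map fun p => ((splits p.2).map fun q => F p.1 q.1 q.2).sum).sum
      = ((splits Y).map fun p => ((splits p.2).map fun q => F q.1 p.1 q.2).sum).sum := by
  induction Y generalizing F with
  | nil => simp [splits]
  | cons a l ih =>
    simp only [splits, List.map_append, List.map_map, List.sum_append, Function.comp_def,
      List.sum_map_add]
    rw [ih fun A S T => F (a :: A) S T, ih fun A S T => F A (a :: S) T,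
      ih fun A S T => F A S (a :: T)]
    abel

end Splits

section Boltzmann

variable {d : ℕ} {g : Zd d → ℝ}

lemma boltzL_cons (x : Zd d) (X : List (Zd d)) :
    boltzL d g (x :: X) = (X.map fun y => 1 + g (x - y)).prod * boltzL d g X := by
  unfold boltzL
  rw [prod_filter_lt_eq_prod_prod_Ioi (fun i j => 1 + g ((x :: X).get i - (x :: X).get j)),
    prod_filter_lt_eq_prod_prod_Ioi (fun i j => 1 + g (X.get i - X.get j))]
  refine (Fin.prod_univ_succ _).trans (congrArg₂ _ ?_ (Finset.prod_congr rfl fun i _ => ?_))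
  · exact (Fin.prod_Ioi_zero (n := X.length) _).trans
      (Fin.prod_univ_fun_getElem X fun y => 1 + g (x - y))
  · exact Fin.prod_Ioi_succ (n := X.length) _ i

lemma boltzL_perm (heven : ∀ x, g x = g (-x)) {X Y : List (Zd d)} (h : X.Perm Y) :
    boltzL d g X = boltzL d g Y := by
  induction h with
  | nil => rfl
  | cons a h ih => rw [boltzL_cons, boltzL_cons, ih, (h.map _).prod_eq]
  | swap x y l =>
    simp only [boltzL_cons, List.map_cons, List.prod_cons]
    rw [heven (y - x), neg_sub]
    ring
  | trans _ _ ih₁ ih₂ => exact ih₁.trans ih₂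

lemma boltzL_cons_append_eq_sum_splits (heven : ∀ x, g x = g (-x)) (x₁ : Zd d)
    (X' B : List (Zd d)) :
    boltzL d g ((x₁ :: X') ++ B)
      = ((splits B).map fun q => ((X'.map fun x => 1 + g (x - x₁)).prod *
          (q.1.map fun y => g (y - x₁)).prod) * boltzL d g ((X' ++ q.1) ++ q.2)).sum := by
  have hflip : ∀ y, g (x₁ - y) = g (y - x₁) := fun y => by rw [heven, neg_sub]
  have hperm : ∀ q ∈ splits B, boltzL d g ((X' ++ q.1) ++ q.2) = boltzL d g (X' ++ B) := by
    intro q hq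
    rw [List.append_assoc]
    exact boltzL_perm heven ((perm_of_mem_splits q hq).append_left X')
  rw [List.map_congr_left fun q hq => by rw [hperm q hq], List.sum_map_mul_right,
    List.sum_map_mul_left, sum_splits_prod_map, List.cons_append, boltzL_cons]
  simp only [hflip, List.map_append, List.prod_append, mul_assoc]

end Boltzmann

lemma convA_sum_splits {d : ℕ} (χ w : List (Zd d) → ℝ) (φ : List (Zd d) → List (Zd d) → ℝ)
    (Y : List (Zd d)) :
    convA d χ (fun B => ((splits B).map fun q => w q.1 * φ q.1 q.2).sum) Y
      = ((splits Y).map fun p => w p.1 * convA d χ (φ p.1) p.2).sum := by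
  unfold convA
  simp only [← List.sum_map_mul_left]
  exact (sum_splits_sum_splits_comm Y fun A S T => χ A * (w S * φ S T)).trans
    (congrArg List.sum (List.map_congr_left fun p _ =>
      congrArg List.sum (List.map_congr_left fun q _ => by ring)))

theorem statement9_general (d : ℕ) (g : Zd d → ℝ)
    (heven : ∀ x, g x = g (-x))
    (ψinv : List (Zd d) → ℝ)
    (hinv : ∀ X : List (Zd d), convA d ψinv (boltzL d g) X = oneA d X) :
    (∀ Y : List (Zd d),
      convA d ψinv (fun Y' => boltzL d g ([] ++ Y')) Y = oneA d Y) ∧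
    (∀ (x₁ : Zd d) (X' Y : List (Zd d)),
      convA d ψinv (fun Y' => boltzL d g ((x₁ :: X') ++ Y')) Y =
        (X'.map fun x => 1 + g (x - x₁)).prod *
          ((splits Y).map fun p =>
            (p.1.map fun y => g (y - x₁)).prod *
              convA d ψinv (fun Y' => boltzL d g ((X' ++ p.1) ++ Y')) p.2).sum) := by
  refine ⟨hinv, fun x₁ X' Y => ?_⟩
  simp_rw [boltzL_cons_append_eq_sum_splits heven x₁ X']
  rw [convA_sum_splits ψinv (fun S => (X'.map fun x => 1 + g (x - x₁)).prod *
    (S.map fun y => g (y - x₁)).prod) fun S T => boltzL d g ((X' ++ S) ++ T)]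
  simp only [mul_assoc, List.sum_map_mul_left]

/-- For `g` bounded and even, the functions `φ̃_X = ψ⁻¹ * D_X ψ` satisfy
`φ̃_∅ = 𝟏` and the recurrence
`φ̃_X(Y) = ∏_{i=2}^m (1+g(x_i-x₁)) ∑_{S⊆Y} (∏_{y_j∈S} g(y_j-x₁)) φ̃_{(x₂,…,x_m,S)}(Y∖S)`. -/
theorem statement9 (d : ℕ) (hd : 1 ≤ d) (g : Zd d → ℝ)
    (hbdd : ∃ M : ℝ, ∀ x, |g x| ≤ M) (heven : ∀ x, g x = g (-x))
    (ψinv : List (Zd d) → ℝ) (hψinv : BoundedA d ψinv)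
    (hinv : ∀ X : List (Zd d), convA d ψinv (boltzL d g) X = oneA d X) :
    (∀ Y : List (Zd d),
      convA d ψinv (fun Y' => boltzL d g ([] ++ Y')) Y = oneA d Y) ∧
    (∀ (x₁ : Zd d) (X' Y : List (Zd d)),
      convA d ψinv (fun Y' => boltzL d g ((x₁ :: X') ++ Y')) Y =
        (X'.map fun x => 1 + g (x - x₁)).prod *
          ((splits Y).map fun p =>
            (p.1.map fun y => g (y - x₁)).prod *
              convA d ψinv (fun Y' => boltzL d g ((X' ++ p.1) ++ Y')) p.2).sum) :=
  statement9_general d g heven ψinv hinv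
end
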